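/- arXiv:2505.22836 — 4 statements merged into one kernel-verified Lean document; each statement's English description precedes it below -/
import Mathlib

section
/- Let (W_t)_{t≥0} be a standard Brownian motion and let T > 0. Then, almost surely, the sum over i = 0, …, ⌊nT⌋ − 1 of |W_{(i+1)/n} − W_{i/n}| tends to +∞ as n → ∞. -/
/-!
Scaled by `√n`, the increments of `W` over the grid of mesh `1/n` are independent standard
Gaussians `Zᵢ`, so the Chernoff bound at `t = -1` gives
`P(∑_{i<⌊nT⌋} |ΔᵢW| ≤ c√n) = P(∑ |Zᵢ| ≤ cn) ≤ e^{cn} ρ^{⌊nT⌋}` with `ρ = E e^{-|Z|} < 1`.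
For small `c > 0` this decays geometrically in `n`, so by Borel–Cantelli the first-variation
sums almost surely eventually exceed `c√n`.
-/

open MeasureTheory ProbabilityTheory Filter

/-- A standard Brownian motion: `W 0 = 0` a.s., a.s. continuous paths,
independent increments, and Gaussian increments `W t - W s ~ N(0, t - s)`. -/
structure IsStandardBrownianMotion {Ω : Type*} [MeasurableSpace Ω]
    (P : Measure Ω) (W : ℝ → Ω → ℝ) : Prop where
  isProbability : IsProbabilityMeasure P
  measurable : ∀ t : ℝ, Measurable (W t)
  init : ∀ᵐ ω ∂P, W 0 ω = 0
  cont : ∀ᵐ ω ∂P, Continuous fun t => W t ω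
  indepIncr : ∀ (n : ℕ) (t : Fin (n + 1) → ℝ), Monotone t →
    iIndepFun
      (fun i : Fin n => fun ω => W (t i.succ) ω - W (t i.castSucc) ω) P
  gaussIncr : ∀ s t : ℝ, 0 ≤ s → s ≤ t →
    P.map (fun ω => W t ω - W s ω) = gaussianReal 0 (t - s).toNNReal

open Real Finset

lemma integrable_exp_of_nonpos {Ω : Type*} [MeasurableSpace Ω] {μ : Measure Ω}
    [IsFiniteMeasure μ] {f : Ω → ℝ} (hf : AEStronglyMeasurable f μ) (hf_nonpos : ∀ ω, f ω ≤ 0) :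
    Integrable (fun ω => exp (f ω)) μ :=
  (integrable_const 1).mono' (continuous_exp.comp_aestronglyMeasurable hf)
    (ae_of_all _ fun ω => by simpa [abs_of_pos (exp_pos _)] using hf_nonpos ω)

lemma Real.pow_floor_le_inv_mul_rpow {ρ : ℝ} (hρ₀ : 0 < ρ) (hρ₁ : ρ ≤ 1) (x : ℝ) :
    ρ ^ ⌊x⌋₊ ≤ ρ⁻¹ * ρ ^ x := by
  calc ρ ^ ⌊x⌋₊ = ρ ^ (⌊x⌋₊ : ℝ) := (rpow_natCast ρ _).symm
    _ ≤ ρ ^ (x - 1) := rpow_le_rpow_of_exponent_ge hρ₀ hρ₁ (by linarith [Nat.lt_floor_add_one x])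
    _ = ρ⁻¹ * ρ ^ x := by rw [rpow_sub hρ₀, rpow_one, div_eq_inv_mul]

lemma Real.exists_pos_exp_mul_lt_one {q : ℝ} (hq₀ : 0 < q) (hq₁ : q < 1) :
    ∃ c > 0, exp c * q < 1 := by
  have hlog : log q < 0 := log_neg hq₀ hq₁
  refine ⟨-log q / 2, by linarith, ?_⟩
  calc exp (-log q / 2) * q = exp (log q / 2) := by
        rw [← exp_log hq₀, ← exp_add, log_exp]; ring_nf
    _ < 1 := exp_lt_one_iff.2 (by linarith)

theorem MeasureTheory.ae_eventually_notMem_of_measureReal_le_geometric {Ω : Type*}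
    [MeasurableSpace Ω] {μ : Measure Ω} [IsFiniteMeasure μ] {s : ℕ → Set Ω} {C r : ℝ}
    (hr₀ : 0 ≤ r) (hr₁ : r < 1) (hs : ∀ n, μ.real (s n) ≤ C * r ^ n) :
    ∀ᵐ ω ∂μ, ∀ᶠ n in atTop, ω ∉ s n := by
  have hsum : Summable fun n => μ.real (s n) :=
    ((summable_geometric_of_lt_one hr₀ hr₁).mul_left C).of_nonneg_of_le
      (fun _ => measureReal_nonneg) hs
  refine ae_eventually_notMem ?_
  simp_rw [← ofReal_measureReal (measure_ne_top μ (s _))]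
  rw [← ENNReal.ofReal_tsum_of_nonneg (fun _ => measureReal_nonneg) hsum]
  exact ENNReal.ofReal_ne_top

lemma integrable_exp_mul_neg_abs {Ω : Type*} [MeasurableSpace Ω] {μ : Measure Ω}
    [IsFiniteMeasure μ] {X : Ω → ℝ} (hX : AEStronglyMeasurable X μ) {t : ℝ} (ht : 0 ≤ t) :
    Integrable (fun ω => exp (t * -|X ω|)) μ :=
  integrable_exp_of_nonpos (by fun_prop) fun ω => mul_nonpos_of_nonneg_of_nonpos ht (by simp)

noncomputable def stdGaussianMgfNegAbs : ℝ := mgf (fun z => -|z|) (gaussianReal 0 1) 1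

lemma stdGaussianMgfNegAbs_pos : 0 < stdGaussianMgfNegAbs :=
  mgf_pos (integrable_exp_mul_neg_abs aestronglyMeasurable_id zero_le_one)

lemma stdGaussianMgfNegAbs_lt_one : stdGaussianMgfNegAbs < 1 := by
  have := nullSingletonClass_gaussianReal (μ := 0) one_ne_zero
  have hint : Integrable (fun z : ℝ => exp (1 * -|z|)) (gaussianReal 0 1) :=
    integrable_exp_mul_neg_abs aestronglyMeasurable_id zero_le_one
  have hsupport : Function.support (fun z : ℝ => 1 - exp (1 * -|z|)) = {0}ᶜ := by
    ext z
    simp [sub_eq_zero, eq_comm (a := (1 : ℝ))]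
  have hgap : 0 < ∫ z, (1 - exp (1 * -|z|)) ∂gaussianReal 0 1 := by
    rw [integral_pos_iff_support_of_nonneg (f := fun z : ℝ => 1 - exp (1 * -|z|))
      (fun z => by simp) ((integrable_const 1).sub hint),
      hsupport, measure_compl (measurableSet_singleton 0) (measure_ne_top _ _)]
    simp
  rw [integral_sub (integrable_const 1) hint] at hgap
  simpa [stdGaussianMgfNegAbs, mgf] using hgap

theorem measureReal_sum_abs_le_le_of_iIndepFun_stdGaussian {Ω ι : Type*} [MeasurableSpace Ω]
    {P : Measure Ω} {Z : ι → Ω → ℝ} (hZ_meas : ∀ i, Measurable (Z i)) (hZ_indep : iIndepFun Z P)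
    (hZ_law : ∀ i, P.map (Z i) = gaussianReal 0 1) (s : Finset ι) (a : ℝ) :
    P.real {ω | ∑ i ∈ s, |Z i ω| ≤ a} ≤ exp a * stdGaussianMgfNegAbs ^ #s := by
  have := hZ_indep.isProbabilityMeasure
  have hmgf_term : ∀ i, mgf (fun ω => -|Z i ω|) P 1 = stdGaussianMgfNegAbs := fun i => by
    rw [stdGaussianMgfNegAbs, ← hZ_law i, mgf_map (hZ_meas i).aemeasurable (by fun_prop)]
    rfl
  have hmgf_sum : mgf (fun ω => ∑ i ∈ s, |Z i ω|) P (-1) = stdGaussianMgfNegAbs ^ #s := by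
    have hindep : iIndepFun (fun i ω => -|Z i ω|) P :=
      hZ_indep.comp (fun _ z => -|z|) fun _ => by fun_prop
    rw [← mgf_neg]
    convert hindep.mgf_sum (fun i => by fun_prop) s using 1
    · congr 1
      ext ω
      simp
    · rw [prod_congr rfl fun i _ => hmgf_term i, prod_const]
  calc P.real {ω | ∑ i ∈ s, |Z i ω| ≤ a}
      ≤ exp (-(-1) * a) * mgf (fun ω => ∑ i ∈ s, |Z i ω|) P (-1) :=
        measure_le_le_exp_mul_mgf a (by norm_num)
          (integrable_exp_of_nonpos (by fun_prop) fun ω => by simp [sum_nonneg])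
    _ = exp a * stdGaussianMgfNegAbs ^ #s := by rw [hmgf_sum, neg_neg, one_mul]

namespace IsStandardBrownianMotion

variable {Ω : Type*} [MeasurableSpace Ω] {P : Measure Ω} {W : ℝ → Ω → ℝ}

lemma map_const_mul_increment (hW : IsStandardBrownianMotion P W) (c : ℝ) {s t : ℝ}
    (hs : 0 ≤ s) (hst : s ≤ t) :
    P.map (fun ω => c * (W t ω - W s ω)) =
      gaussianReal 0 (.mk (c ^ 2) (sq_nonneg c) * (t - s).toNNReal) := by
  have hmeas : Measurable fun ω => W t ω - W s ω := (hW.measurable t).sub (hW.measurable s)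
  rw [← Function.comp_def (c * ·), ← Measure.map_map (measurable_const_mul c) hmeas,
    hW.gaussIncr s t hs hst, gaussianReal_map_const_mul, mul_zero]

lemma map_sqrt_mul_increment (hW : IsStandardBrownianMotion P W) {n : ℕ} (hn : n ≠ 0) (i : ℕ) :
    P.map (fun ω => √n * (W ((i + 1 : ℕ) / (n : ℝ)) ω - W ((i : ℕ) / (n : ℝ)) ω)) =
      gaussianReal 0 1 := by
  have hn' : (0 : ℝ) < n := by positivity
  rw [hW.map_const_mul_increment _ (by positivity)
    (div_le_div_of_nonneg_right (by simp) hn'.le)]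
  have hstep : ((i + 1 : ℕ) / (n : ℝ) - (i : ℕ) / (n : ℝ)) = (n : ℝ)⁻¹ := by
    push_cast
    ring
  rw [hstep]
  congr 1
  rw [← NNReal.coe_inj, NNReal.coe_mul, Real.coe_toNNReal _ (by positivity)]
  simp [sq_sqrt hn'.le, hn'.ne']

lemma iIndepFun_increments (hW : IsStandardBrownianMotion P W) (n m : ℕ) :
    iIndepFun (fun (i : Fin m) ω => W (((i : ℕ) + 1 : ℕ) / (n : ℝ)) ω - W ((i : ℕ) / (n : ℝ)) ω)
      P := by
  have hmono : Monotone fun j : Fin (m + 1) => ((j : ℕ) : ℝ) / n :=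
    fun j k hjk => div_le_div_of_nonneg_right (by exact_mod_cast hjk) n.cast_nonneg
  simpa using hW.indepIncr m _ hmono

theorem measureReal_sum_abs_increment_le (hW : IsStandardBrownianMotion P W) {n : ℕ}
    (hn : n ≠ 0) (m : ℕ) (a : ℝ) :
    P.real {ω | ∑ i ∈ range m, |W ((i + 1 : ℕ) / (n : ℝ)) ω - W ((i : ℕ) / (n : ℝ)) ω| ≤ a} ≤
      exp (√n * a) * stdGaussianMgfNegAbs ^ m := by
  set Z : Fin m → Ω → ℝ :=
    fun i ω => √n * (W (((i : ℕ) + 1 : ℕ) / (n : ℝ)) ω - W ((i : ℕ) / (n : ℝ)) ω)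
  have hsqrt : 0 < √(n : ℝ) := sqrt_pos.2 (by positivity)
  have hset : {ω | ∑ i ∈ range m, |W ((i + 1 : ℕ) / (n : ℝ)) ω - W ((i : ℕ) / (n : ℝ)) ω| ≤ a} =
      {ω | ∑ i, |Z i ω| ≤ √n * a} := by
    ext ω
    simp only [Set.mem_ofPred_eq, Z, abs_mul, abs_of_pos hsqrt, ← mul_sum,
      Fin.sum_univ_eq_sum_range
        (fun i => |W ((i + 1 : ℕ) / (n : ℝ)) ω - W ((i : ℕ) / (n : ℝ)) ω|),
      mul_le_mul_iff_right₀ hsqrt]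
  have hchernoff := measureReal_sum_abs_le_le_of_iIndepFun_stdGaussian
    (fun i => ((hW.measurable _).sub (hW.measurable _)).const_mul _)
    ((hW.iIndepFun_increments n m).comp (fun _ x => √n * x) fun _ => measurable_const_mul _)
    (fun i => hW.map_sqrt_mul_increment hn i) univ (√n * a)
  rw [card_univ, Fintype.card_fin] at hchernoff
  rw [hset]
  exact hchernoff

theorem measureReal_firstVariation_le_geometric (hW : IsStandardBrownianMotion P W)
    (T c : ℝ) (n : ℕ) :
    P.real {ω | ∑ i ∈ range ⌊(n : ℝ) * T⌋₊,
        |W ((i + 1 : ℕ) / (n : ℝ)) ω - W ((i : ℕ) / (n : ℝ)) ω| ≤ c * √n} ≤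
      stdGaussianMgfNegAbs⁻¹ * (exp c * stdGaussianMgfNegAbs ^ T) ^ n := by
  have := hW.isProbability
  have hρ₀ := stdGaussianMgfNegAbs_pos
  have hρ₁ := stdGaussianMgfNegAbs_lt_one
  rcases eq_or_ne n 0 with rfl | hn
  · simpa using (one_le_inv₀ hρ₀).2 hρ₁.le
  calc _ ≤ exp (√n * (c * √n)) * stdGaussianMgfNegAbs ^ ⌊(n : ℝ) * T⌋₊ :=
        hW.measureReal_sum_abs_increment_le hn _ _
    _ ≤ exp (c * n) * (stdGaussianMgfNegAbs⁻¹ * stdGaussianMgfNegAbs ^ ((n : ℝ) * T)) := by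
        rw [mul_left_comm, mul_self_sqrt n.cast_nonneg, mul_comm (n : ℝ)]
        gcongr
        exact pow_floor_le_inv_mul_rpow hρ₀ hρ₁.le _
    _ = _ := by
        rw [mul_comm (n : ℝ) T, rpow_mul hρ₀.le, rpow_natCast, exp_mul, rpow_natCast, mul_pow]
        ring

end IsStandardBrownianMotion

/-- Almost surely, the first-variation sums
`∑_{i=0}^{⌊nT⌋-1} |W_{(i+1)/n} - W_{i/n}|` tend to `+∞` as `n → ∞`. -/
theorem first_variation_of_brownian_tendsto_atTop
    {Ω : Type*} [MeasurableSpace Ω] (P : Measure Ω) (W : ℝ → Ω → ℝ)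
    (hW : IsStandardBrownianMotion P W) (T : ℝ) (hT : 0 < T) :
    ∀ᵐ ω ∂P, Tendsto
      (fun n : ℕ => ∑ i ∈ Finset.range ⌊(n : ℝ) * T⌋₊,
        |W ((i + 1 : ℕ) / (n : ℝ)) ω - W ((i : ℕ) / (n : ℝ)) ω|)
      atTop atTop := by
  have := hW.isProbability
  have hρ₀ := stdGaussianMgfNegAbs_pos
  obtain ⟨c, hc, hr⟩ := exists_pos_exp_mul_lt_one (rpow_pos_of_pos hρ₀ T)
    (rpow_lt_one hρ₀.le stdGaussianMgfNegAbs_lt_one hT)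
  have hsmall := ae_eventually_notMem_of_measureReal_le_geometric (by positivity) hr
    (hW.measureReal_firstVariation_le_geometric T c)
  filter_upwards [hsmall] with ω hω
  refine tendsto_atTop_mono' _ ?_
    ((tendsto_sqrt_atTop.comp tendsto_natCast_atTop_atTop).const_mul_atTop hc)
  filter_upwards [hω] with n hn
  exact (not_le.1 hn).le
end

section
/- Let T > 0, let L > 0, and let g : [0, T] → ℝ be continuous. If the sums S²_n = Σ_{i=0}^{⌊nT⌋−1} (g((i+1)/n) − g(i/n))² converge to L as n → ∞, then the sums S¹_n = Σ_{i=0}^{⌊nT⌋−1} |g((i+1)/n) − g(i/n)| tend to +∞ as n → ∞. -/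
/-!
By uniform continuity of `g` on `[0, T]`, for every `ε > 0` all increments of `g` at mesh `1 / n`
are eventually at most `ε`, so `S²ₙ ≤ ε S¹ₙ`. Since `S²ₙ → L > 0`, this forces `S¹ₙ ≥ L / (2ε)`
eventually, for every `ε > 0`.
-/

open Filter Topology

theorem tendsto_atTop_of_forall_eventually_le_mul {α : Type*} {l : Filter α} {a b : α → ℝ}
    {L : ℝ} (ha : Tendsto a l (𝓝 L)) (hL : 0 < L) (hab : ∀ ε > 0, ∀ᶠ x in l, a x ≤ ε * b x) :
    Tendsto b l atTop := by
  refine tendsto_atTop.2 fun C => ?_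
  have hM : 0 < max C 1 := lt_max_of_lt_right one_pos
  filter_upwards [ha.eventually (lt_mem_nhds (half_lt_self hL)),
    hab (L / 2 / max C 1) (by positivity)] with x hlt hle
  have key : L / 2 * max C 1 < L / 2 * b x := by
    have := hlt.trans_le hle
    rwa [div_mul_eq_mul_div, lt_div_iff₀ hM] at this
  exact (le_max_left C 1).trans (lt_of_mul_lt_mul_left key (by positivity)).le

theorem Finset.sum_sq_le_mul_sum_abs {ι : Type*} {s : Finset ι} {f : ι → ℝ} {ε : ℝ}
    (h : ∀ i ∈ s, |f i| ≤ ε) : ∑ i ∈ s, f i ^ 2 ≤ ε * ∑ i ∈ s, |f i| := by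
  rw [Finset.mul_sum]
  refine Finset.sum_le_sum fun i hi => ?_
  rw [← sq_abs, sq]
  exact mul_le_mul_of_nonneg_right (h i hi) (abs_nonneg _)

theorem natCast_div_mem_Icc_of_lt_floor {T : ℝ} {n i : ℕ} (hi : i < ⌊(n : ℝ) * T⌋₊) :
    (i : ℝ) / n ∈ Set.Icc 0 T ∧ ((i + 1 : ℕ) : ℝ) / n ∈ Set.Icc 0 T := by
  have hle : ((i + 1 : ℕ) : ℝ) ≤ n * T := (Nat.le_floor_iff' i.succ_ne_zero).1 hi
  push_cast at hle
  have hn : (0 : ℝ) < n := Nat.cast_pos.2 <| Nat.pos_of_ne_zero <| by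
    rintro rfl
    rw [Nat.cast_zero, zero_mul] at hle
    linarith [i.cast_nonneg (α := ℝ)]
  refine ⟨⟨by positivity, ?_⟩, ⟨by positivity, ?_⟩⟩ <;> rw [div_le_iff₀ hn] <;> push_cast <;>
    linarith

theorem eventually_forall_abs_sub_le_of_uniformContinuousOn {g : ℝ → ℝ} {T ε : ℝ}
    (hg : UniformContinuousOn g (Set.Icc 0 T)) (hε : 0 < ε) :
    ∀ᶠ n : ℕ in atTop, ∀ i < ⌊(n : ℝ) * T⌋₊,
      |g ((i + 1 : ℕ) / (n : ℝ)) - g ((i : ℕ) / (n : ℝ))| ≤ ε := by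
  obtain ⟨δ, hδ, hgδ⟩ := Metric.uniformContinuousOn_iff.1 hg ε hε
  filter_upwards [tendsto_one_div_atTop_nhds_zero_nat.eventually (gt_mem_nhds hδ)]
    with n hn i hi
  obtain ⟨hi₀, hi₁⟩ := natCast_div_mem_Icc_of_lt_floor hi
  have hmesh : dist (((i + 1 : ℕ) : ℝ) / n) ((i : ℝ) / n) < δ := by
    rw [Real.dist_eq, show ((i + 1 : ℕ) : ℝ) / n - i / n = 1 / n by push_cast; ring,
      abs_of_nonneg (by positivity)]
    exact hn
  exact (hgδ _ hi₁ _ hi₀ hmesh).le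

theorem first_variation_tendsto_atTop_of_quadratic_variation_tendsto_general
    (T L : ℝ) (hL : 0 < L) (g : ℝ → ℝ)
    (hg : ContinuousOn g (Set.Icc 0 T))
    (hQV : Tendsto
      (fun n : ℕ => ∑ i ∈ Finset.range ⌊(n : ℝ) * T⌋₊,
        (g ((i + 1 : ℕ) / (n : ℝ)) - g ((i : ℕ) / (n : ℝ))) ^ 2)
      atTop (nhds L)) :
    Tendsto
      (fun n : ℕ => ∑ i ∈ Finset.range ⌊(n : ℝ) * T⌋₊,
        |g ((i + 1 : ℕ) / (n : ℝ)) - g ((i : ℕ) / (n : ℝ))|)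
      atTop atTop := by
  have hUC : UniformContinuousOn g (Set.Icc 0 T) :=
    isCompact_Icc.uniformContinuousOn_of_continuous hg
  refine tendsto_atTop_of_forall_eventually_le_mul hQV hL fun ε hε => ?_
  filter_upwards [eventually_forall_abs_sub_le_of_uniformContinuousOn hUC hε] with n hn
  exact Finset.sum_sq_le_mul_sum_abs fun i hi => hn i (Finset.mem_range.1 hi)

/-- If the discrete quadratic-variation sums of a continuous function `g` on `[0, T]`
converge to a positive limit `L`, then its discrete first-variation sums tend to `+∞`. -/
theorem first_variation_tendsto_atTop_of_quadratic_variation_tendsto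
    (T L : ℝ) (hT : 0 < T) (hL : 0 < L) (g : ℝ → ℝ)
    (hg : ContinuousOn g (Set.Icc 0 T))
    (hQV : Tendsto
      (fun n : ℕ => ∑ i ∈ Finset.range ⌊(n : ℝ) * T⌋₊,
        (g ((i + 1 : ℕ) / (n : ℝ)) - g ((i : ℕ) / (n : ℝ))) ^ 2)
      atTop (nhds L)) :
    Tendsto
      (fun n : ℕ => ∑ i ∈ Finset.range ⌊(n : ℝ) * T⌋₊,
        |g ((i + 1 : ℕ) / (n : ℝ)) - g ((i : ℕ) / (n : ℝ))|)
      atTop atTop :=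
  first_variation_tendsto_atTop_of_quadratic_variation_tendsto_general T L hL g hg hQV
end

section
/- Fix T > 0, K > 0, r ∈ ℝ, ν > 0, and let C_ν(t, x) = x·Φ(d₁(t, x)) − K·e^{−r(T−t)}·Φ(d₂(t, x)) be the Black–Scholes call price. Then for all 0 ≤ t < T and x > 0, C_ν satisfies the Black–Scholes partial differential equation: ∂C_ν/∂t (t, x) + r x · ∂C_ν/∂x (t, x) + (1/2) ν² x² · ∂²C_ν/∂x² (t, x) = r · C_ν(t, x). -/
open Filter

/-- The cumulative distribution function `Φ` of the standard normal law. -/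
noncomputable def stdNormalCdf (x : ℝ) : ℝ :=
  ∫ u in Set.Iic x, Real.exp (-u ^ 2 / 2) / Real.sqrt (2 * Real.pi)

/-- The Black–Scholes quantity `d₁` for maturity `T`, strike `K`, rate `r`,
volatility `ν`. -/
noncomputable def bsD1 (T K r ν t x : ℝ) : ℝ :=
  (Real.log (x / K) + (r + ν ^ 2 / 2) * (T - t)) / (ν * Real.sqrt (T - t))

/-- The Black–Scholes quantity `d₂ = d₁ - ν √(T - t)`. -/
noncomputable def bsD2 (T K r ν t x : ℝ) : ℝ :=
  bsD1 T K r ν t x - ν * Real.sqrt (T - t)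

/-- The Black–Scholes call price
`C_ν(t, x) = x Φ(d₁(t, x)) - K e^{-r(T-t)} Φ(d₂(t, x))`. -/
noncomputable def bsPrice (T K r ν t x : ℝ) : ℝ :=
  x * stdNormalCdf (bsD1 T K r ν t x) -
    K * Real.exp (-r * (T - t)) * stdNormalCdf (bsD2 T K r ν t x)

/-!
Write `φ = Φ'` and `τ = T - t`. Since `d₂ = d₁ - ν√τ` and `d₁ ν√τ = log (x/K) + (r + ν²/2) τ`,
completing the square gives `x φ(d₁) = K e^{-rτ} φ(d₂)`. As `d₁ - d₂` does not depend on `x`,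
this identity cancels the `∂ₓd₁` terms of `∂ₓC`, so `∂ₓC = Φ(d₁)` and `∂ₓₓC = φ(d₁) / (x ν √τ)`;
in `∂ₜC` it leaves only the derivative of `-ν√τ`, so
`∂ₜC = -r K e^{-rτ} Φ(d₂) - x φ(d₁) ν / (2√τ)`. In the equation the two `φ(d₁)` terms cancel
and `r x Φ(d₁) - r K e^{-rτ} Φ(d₂) = r C` remains.
-/

open Real

theorem hasDerivAt_integral_Iic {E : Type*} [NormedAddCommGroup E] [NormedSpace ℝ E]
    [CompleteSpace E] {f : ℝ → E} (hf : Continuous f) (hfi : MeasureTheory.Integrable f)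
    (x : ℝ) : HasDerivAt (fun y => ∫ u in Set.Iic y, f u) (f x) x := by
  have hsplit : (fun y => ∫ u in Set.Iic y, f u) =
      fun y => (∫ u in Set.Iic 0, f u) + ∫ u in (0 : ℝ)..y, f u := by
    funext y
    rw [← intervalIntegral.integral_Iic_sub_Iic hfi.integrableOn hfi.integrableOn]
    abel
  rw [hsplit]
  exact (intervalIntegral.integral_hasDerivAt_right (hf.intervalIntegrable 0 x)
    (hf.stronglyMeasurableAtFilter _ _) hf.continuousAt).const_add _

noncomputable def stdNormalPdf (x : ℝ) : ℝ :=
  exp (-x ^ 2 / 2) / √(2 * π)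

theorem hasDerivAt_stdNormalCdf (x : ℝ) : HasDerivAt stdNormalCdf (stdNormalPdf x) x := by
  have hint : MeasureTheory.Integrable fun u : ℝ => exp (-u ^ 2 / 2) / √(2 * π) := by
    convert (integrable_exp_neg_mul_sq (by norm_num : (0 : ℝ) < 1 / 2)).div_const
      (√(2 * π)) using 3 with u
    ring_nf
  exact hasDerivAt_integral_Iic (by fun_prop) hint x

theorem stdNormalPdf_sub (a b : ℝ) :
    stdNormalPdf (a - b) = stdNormalPdf a * exp (a * b - b ^ 2 / 2) := by
  rw [stdNormalPdf, stdNormalPdf, div_mul_eq_mul_div, ← exp_add]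
  ring_nf

section BlackScholes

variable {T K r ν t : ℝ}

theorem bsD1_mul_vol (hν : ν ≠ 0) (htT : t < T) (x : ℝ) :
    bsD1 T K r ν t x * (ν * √(T - t)) = log (x / K) + (r + ν ^ 2 / 2) * (T - t) := by
  have hs : √(T - t) ≠ 0 := (sqrt_pos.mpr (sub_pos.mpr htT)).ne'
  rw [bsD1]
  field_simp

theorem mul_stdNormalPdf_bsD1 (hK : 0 < K) (hν : ν ≠ 0) (htT : t < T) {x : ℝ} (hx : 0 < x) :
    x * stdNormalPdf (bsD1 T K r ν t x) =
      K * exp (-r * (T - t)) * stdNormalPdf (bsD2 T K r ν t x) := by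
  have hexponent : bsD1 T K r ν t x * (ν * √(T - t)) - (ν * √(T - t)) ^ 2 / 2 =
      log (x / K) + r * (T - t) := by
    rw [bsD1_mul_vol hν htT, mul_pow, sq_sqrt (sub_pos.mpr htT).le]
    ring
  rw [bsD2, stdNormalPdf_sub, hexponent, exp_add, exp_log (div_pos hx hK)]
  field_simp
  rw [mul_assoc, ← exp_add]
  simp

theorem hasDerivAt_bsD1_space (hK : K ≠ 0) {x : ℝ} (hx : x ≠ 0) :
    HasDerivAt (fun y => bsD1 T K r ν t y) (1 / (x * (ν * √(T - t)))) x := by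
  have hlog : HasDerivAt (fun y => log (y / K)) (1 / x) x := by
    refine (((hasDerivAt_id' x).div_const K).log (div_ne_zero hx hK)).congr_deriv ?_
    field_simp
  exact ((hlog.add_const _).div_const (ν * √(T - t))).congr_deriv (div_div _ _ _)

theorem hasDerivAt_bsPrice_space (hK : 0 < K) (hν : ν ≠ 0) (htT : t < T) {x : ℝ} (hx : 0 < x) :
    HasDerivAt (fun y => bsPrice T K r ν t y) (stdNormalCdf (bsD1 T K r ν t x)) x := by
  have hd1 : HasDerivAt (fun y => bsD1 T K r ν t y) (1 / (x * (ν * √(T - t)))) x :=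
    hasDerivAt_bsD1_space hK.ne' hx.ne'
  have hd2 : HasDerivAt (fun y => bsD2 T K r ν t y) (1 / (x * (ν * √(T - t)))) x :=
    hd1.sub_const _
  refine (((hasDerivAt_id' x).mul ((hasDerivAt_stdNormalCdf _).comp x hd1)).sub
    (((hasDerivAt_stdNormalCdf _).comp x hd2).const_mul
      (K * exp (-r * (T - t))))).congr_deriv ?_
  simp only [Function.comp_apply]
  linear_combination (1 / (x * (ν * √(T - t)))) * mul_stdNormalPdf_bsD1 hK hν htT hx

theorem hasDerivAt_deriv_bsPrice_space (hK : 0 < K) (hν : ν ≠ 0) (htT : t < T) {x : ℝ}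
    (hx : 0 < x) :
    HasDerivAt (fun y => deriv (fun z => bsPrice T K r ν t z) y)
      (stdNormalPdf (bsD1 T K r ν t x) / (x * (ν * √(T - t)))) x := by
  have hdelta : (fun y => stdNormalCdf (bsD1 T K r ν t y)) =ᶠ[nhds x]
      fun y => deriv (fun z => bsPrice T K r ν t z) y := by
    filter_upwards [Ioi_mem_nhds hx] with y hy
    exact (hasDerivAt_bsPrice_space hK hν htT hy).deriv.symm
  refine (((hasDerivAt_stdNormalCdf _).comp x
    (hasDerivAt_bsD1_space hK.ne' hx.ne')).congr_of_eventuallyEq hdelta.symm).congr_deriv ?_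
  ring

theorem hasDerivAt_sqrt_sub (htT : t < T) :
    HasDerivAt (fun s => √(T - s)) (-1 / (2 * √(T - t))) t :=
  ((hasDerivAt_id' t).const_sub T).sqrt (sub_pos.mpr htT).ne'

theorem differentiableAt_bsD1_time (hν : ν ≠ 0) (htT : t < T) (x : ℝ) :
    DifferentiableAt ℝ (fun s => bsD1 T K r ν s x) t := by
  have hvol : ν * √(T - t) ≠ 0 := mul_ne_zero hν (sqrt_pos.mpr (sub_pos.mpr htT)).ne'
  have hnum : DifferentiableAt ℝ (fun s => log (x / K) + (r + ν ^ 2 / 2) * (T - s)) t := by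
    fun_prop
  exact hnum.div ((hasDerivAt_sqrt_sub htT).differentiableAt.const_mul ν) hvol

theorem hasDerivAt_bsPrice_time (hK : 0 < K) (hν : ν ≠ 0) (htT : t < T) {x : ℝ} (hx : 0 < x) :
    HasDerivAt (fun s => bsPrice T K r ν s x)
      (-(r * K * exp (-r * (T - t)) * stdNormalCdf (bsD2 T K r ν t x)) -
        x * stdNormalPdf (bsD1 T K r ν t x) * ν / (2 * √(T - t))) t := by
  have hd1 := (differentiableAt_bsD1_time (K := K) (r := r) hν htT x).hasDerivAt
  have hd2 : HasDerivAt (fun s => bsD2 T K r ν s x)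
      (deriv (fun s => bsD1 T K r ν s x) t - ν * (-1 / (2 * √(T - t)))) t :=
    hd1.sub ((hasDerivAt_sqrt_sub htT).const_mul ν)
  have hdisc : HasDerivAt (fun s => K * exp (-r * (T - s))) (K * (exp (-r * (T - t)) * r)) t :=
    ((((hasDerivAt_id' t).const_sub T).const_mul (-r)).exp.const_mul K).congr_deriv (by ring)
  refine ((((hasDerivAt_stdNormalCdf _).comp t hd1).const_mul x).sub
    (hdisc.mul ((hasDerivAt_stdNormalCdf _).comp t hd2))).congr_deriv ?_
  simp only [Function.comp_apply]
  linear_combination (deriv (fun s => bsD1 T K r ν s x) t + ν / (2 * √(T - t))) *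
    mul_stdNormalPdf_bsD1 hK hν htT hx

end BlackScholes

theorem bsPrice_satisfies_bs_pde_general
    (T K r ν : ℝ) (hK : 0 < K) (hν : 0 < ν) :
    ∀ t x : ℝ, 0 ≤ t → t < T → 0 < x →
      deriv (fun s => bsPrice T K r ν s x) t +
        r * x * deriv (fun y => bsPrice T K r ν t y) x +
        (1 / 2) * ν ^ 2 * x ^ 2 *
          deriv (fun y => deriv (fun z => bsPrice T K r ν t z) y) x =
      r * bsPrice T K r ν t x := by
  intro t x _ htT hx
  rw [(hasDerivAt_bsPrice_time hK hν.ne' htT hx).deriv,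
    (hasDerivAt_bsPrice_space hK hν.ne' htT hx).deriv,
    (hasDerivAt_deriv_bsPrice_space hK hν.ne' htT hx).deriv, bsPrice]
  have hvol : ν * √(T - t) ≠ 0 := mul_ne_zero hν.ne' (sqrt_pos.mpr (sub_pos.mpr htT)).ne'
  field_simp
  ring

/-- The Black–Scholes call price satisfies the Black–Scholes partial differential equation
`∂C/∂t + r x ∂C/∂x + (1/2) ν² x² ∂²C/∂x² = r C` for `0 ≤ t < T` and `x > 0`. -/
theorem bsPrice_satisfies_bs_pde
    (T K r ν : ℝ) (hT : 0 < T) (hK : 0 < K) (hν : 0 < ν) :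
    ∀ t x : ℝ, 0 ≤ t → t < T → 0 < x →
      deriv (fun s => bsPrice T K r ν s x) t +
        r * x * deriv (fun y => bsPrice T K r ν t y) x +
        (1 / 2) * ν ^ 2 * x ^ 2 *
          deriv (fun y => deriv (fun z => bsPrice T K r ν t z) y) x =
      r * bsPrice T K r ν t x :=
  bsPrice_satisfies_bs_pde_general T K r ν hK hν
end

section
/- Let Z be a standard normal random variable and let σ > 0 and μ ∈ ℝ. Then lim_{h→0⁺} (1/√h) · E[ |exp(σ·√h·Z + (μ − σ²/2)·h) − 1| ] = σ·√(2/π). In other words, the expected absolute relative move of a geometric Brownian motion with volatility σ and drift μ over a time interval of length h is asymptotically σ·√(2h/π) as h → 0. -/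
/-!
Write the move as `exp (g √h) - 1` with `g t = σ z t + (μ - σ²/2) t²`. Since `g 0 = 0` and
`g' 0 = σ z`, the integrand divided by `√h` tends to `σ |z|` for every `z`, and
`E |Z| = √(2/π)`. For `0 < h ≤ 1` the bound `|eˣ - 1| ≤ |x| e^|x|` dominates the rescaled integrand
by `exp (2 (σ |z| + |μ - σ²/2|))`, which has finite Gaussian expectation, so dominated convergence
applies.
-/

open MeasureTheory ProbabilityTheory Filter Real Set Topology
open scoped NNReal

lemma abs_exp_sub_one_le_abs_mul_exp_abs (x : ℝ) : |exp x - 1| ≤ |x| * exp |x| := by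
  rcases le_or_gt 0 x with hx | hx
  · rw [abs_of_nonneg hx, abs_of_nonneg (by linarith [one_le_exp hx])]
    have h_inv : exp (-x) * exp x = 1 := by rw [← exp_add, neg_add_cancel, exp_zero]
    nlinarith [add_one_le_exp (-x), exp_pos x]
  · rw [abs_of_neg hx, abs_of_nonpos (by linarith [exp_lt_one_iff.mpr hx])]
    nlinarith [add_one_le_exp x, one_le_exp (neg_nonneg.mpr hx.le)]

lemma abs_exp_sub_one_le_mul_exp_two_mul {x s a : ℝ} (hs : 0 ≤ s) (hs1 : s ≤ 1) (ha : 0 ≤ a)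
    (hx : |x| ≤ s * a) : |exp x - 1| ≤ s * exp (2 * a) := by
  have hsa : s * a ≤ a := mul_le_of_le_one_left ha hs1
  calc |exp x - 1| ≤ |x| * exp |x| := abs_exp_sub_one_le_abs_mul_exp_abs x
    _ ≤ s * a * exp a := by gcongr; exact hx.trans hsa
    _ ≤ s * (exp a * exp a) := by
        rw [mul_assoc]; gcongr; linarith [add_one_le_exp a]
    _ = s * exp (2 * a) := by rw [← exp_add, two_mul]

lemma integral_Ioi_mul_exp_neg_mul_sq {b : ℝ} (hb : 0 < b) :
    ∫ x in Ioi (0 : ℝ), x * exp (-b * x ^ 2) = (2 * b)⁻¹ := by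
  have h := integral_rpow_mul_exp_neg_mul_rpow two_pos (by norm_num : (-1 : ℝ) < 1) hb
  norm_num [rpow_neg_one] at h
  simp only [neg_mul, h]
  ring

lemma integral_abs_sub_gaussianReal (μ : ℝ) (v : ℝ≥0) :
    ∫ x, |x - μ| ∂gaussianReal μ v = √(2 * v / π) := by
  rcases eq_or_ne v 0 with rfl | hv
  · simp [gaussianReal_zero_var]
  have hv' : (0 : ℝ) < v := by positivity
  have h_abs_moment : ∫ x, |x| * exp (-(2 * (v : ℝ))⁻¹ * |x| ^ 2) = 2 * v := by
    rw [integral_comp_abs (f := fun x => x * exp (-(2 * (v : ℝ))⁻¹ * x ^ 2)),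
      integral_Ioi_mul_exp_neg_mul_sq (by positivity)]
    field_simp
  calc ∫ x, |x - μ| ∂gaussianReal μ v
      = ∫ x, gaussianPDFReal 0 v (x - μ) * |x - μ| := by
        rw [integral_gaussianReal_eq_integral_smul hv]
        simp [gaussianPDFReal_sub]
    _ = ∫ x, (√(2 * π * v))⁻¹ * (|x| * exp (-(2 * (v : ℝ))⁻¹ * |x| ^ 2)) := by
        rw [integral_sub_right_eq_self (fun x => gaussianPDFReal 0 v x * |x|)]
        congr 1 with x
        simp only [gaussianPDFReal, sub_zero, sq_abs]
        ring_nf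
    _ = √(2 * v / π) := by
        rw [integral_const_mul, h_abs_moment, show 2 * (v : ℝ) / π = (2 * v) ^ 2 / (2 * π * v) by
          field_simp, sqrt_div' _ (by positivity), sqrt_sq (by positivity)]
        ring

lemma inv_sqrt_mul_abs_exp_sub_one_le {a c h : ℝ} (h0 : 0 < h) (h1 : h ≤ 1) :
    (1 / √h) * |exp (a * √h + c * h) - 1| ≤ exp (2 * (|a| + |c|)) := by
  have hs : 0 < √h := sqrt_pos.mpr h0
  have hs1 : √h ≤ 1 := sqrt_le_one.mpr h1
  have h_le_sqrt : h ≤ √h := by nlinarith [mul_self_sqrt h0.le]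
  have hx : |a * √h + c * h| ≤ √h * (|a| + |c|) := by
    calc |a * √h + c * h| ≤ |a| * √h + |c| * h := by
          simpa [abs_mul, abs_of_pos hs, abs_of_pos h0] using abs_add_le (a * √h) (c * h)
      _ ≤ √h * (|a| + |c|) := by nlinarith [mul_le_mul_of_nonneg_left h_le_sqrt (abs_nonneg c)]
  rw [one_div, inv_mul_le_iff₀ hs]
  exact abs_exp_sub_one_le_mul_exp_two_mul hs.le hs1 (by positivity) hx

lemma tendsto_inv_sqrt_mul_abs_exp_sub_one (a c : ℝ) :
    Tendsto (fun h => (1 / √h) * |exp (a * √h + c * h) - 1|) (𝓝[>] 0) (𝓝 |a|) := by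
  have h_deriv : HasDerivAt (fun t => exp (a * t + c * t ^ 2)) a 0 := by
    simpa using (((hasDerivAt_id (0 : ℝ)).const_mul a).add
      ((hasDerivAt_pow 2 (0 : ℝ)).const_mul c)).exp
  have h_sqrt : Tendsto sqrt (𝓝[>] 0) (𝓝[>] 0) :=
    tendsto_nhdsWithin_iff.mpr ⟨(continuous_sqrt.tendsto' 0 0 sqrt_zero).mono_left
      nhdsWithin_le_nhds, eventually_mem_nhdsWithin.mono fun _ hh => sqrt_pos.mpr hh⟩
  refine (h_deriv.tendsto_slope_zero_right.abs.comp h_sqrt).congr' ?_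
  filter_upwards [self_mem_nhdsWithin] with h hh
  simp [sq_sqrt (le_of_lt hh), abs_mul, abs_of_pos (sqrt_pos.mpr hh)]

/-- The expected absolute relative move of a geometric Brownian motion with volatility `σ` and
drift `μ` over a time interval of length `h` is asymptotically `σ √(2h/π)` as `h → 0⁺`:
`(1/√h) E[|exp(σ √h Z + (μ - σ²/2) h) - 1|] → σ √(2/π)`, where `Z` is standard normal. -/
theorem expected_abs_gbm_move_asymptotic (σ μ : ℝ) (hσ : 0 < σ) :
    Tendsto
      (fun h : ℝ => (1 / Real.sqrt h) *
        ∫ z : ℝ, |Real.exp (σ * Real.sqrt h * z + (μ - σ ^ 2 / 2) * h) - 1|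
          ∂(gaussianReal 0 1))
      (nhdsWithin 0 (Set.Ioi 0)) (nhds (σ * Real.sqrt (2 / Real.pi))) := by
  set c := μ - σ ^ 2 / 2
  have h_limit : σ * √(2 / π) = ∫ z, |σ * z| ∂gaussianReal 0 1 := by
    simpa [abs_mul, abs_of_pos hσ, integral_const_mul] using
      congr_arg (σ * ·) (integral_abs_sub_gaussianReal 0 1).symm
  have h_bound_int : Integrable (fun z => exp (2 * (|σ * z| + |c|))) (gaussianReal 0 1) := by
    refine ((integrable_exp_abs_mul_abs (t := 2 * σ) (integrable_exp_mul_gaussianReal _)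
      (integrable_exp_mul_gaussianReal _)).mul_const (exp (2 * |c|))).congr (.of_forall fun z => ?_)
    simp only [← exp_add, abs_mul]
    ring_nf
  -- the integrand becomes `(1 / √h) * |exp (a * √h + c * h) - 1|` with `a = σ * z`
  simp_rw [mul_right_comm σ, h_limit, ← integral_const_mul]
  refine tendsto_integral_filter_of_dominated_convergence _ (.of_forall fun h => by fun_prop)
    ?_ h_bound_int (.of_forall fun z => tendsto_inv_sqrt_mul_abs_exp_sub_one (σ * z) c)
  filter_upwards [Ioc_mem_nhdsGT one_pos] with h hh
  exact .of_forall fun z => (norm_of_nonneg (by positivity)).trans_le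
    (inv_sqrt_mul_abs_exp_sub_one_le hh.1 hh.2)
end
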